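/- arXiv:2507.02422 — 3 statements merged into one kernel-verified Lean document; each statement's English description precedes it below -/
import Mathlib

section
/- Let Φ be a positive unital linear map from the n×n complex matrices to the m×m complex matrices, let x be a Hermitian n×n complex matrix, and let f : ℝ → ℝ be a continuous convex function. Then Φ(x) is Hermitian and Tr f(Φ(x)) ≤ Tr Φ(f(x)). -/
/-!
Write `x = ∑ⱼ μⱼ Pⱼ` with rank-one eigenprojections `Pⱼ`, and let `(wᵢ)` be an orthonormal
eigenbasis of `Φ x` with eigenvalues `λᵢ`. The weights `cⱼᵢ = ⟪wᵢ, Φ(Pⱼ) wᵢ⟫` are nonnegative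
since `Φ` is positive, satisfy `∑ⱼ cⱼᵢ = 1` since `Φ` is unital, and `λᵢ = ∑ⱼ cⱼᵢ μⱼ` by
linearity. Jensen's inequality gives `f(λᵢ) ≤ ∑ⱼ cⱼᵢ f(μⱼ)` for each `i`; summing over `i`, the
left side becomes `Tr f(Φ x)` and the right side `∑ⱼ f(μⱼ) Tr Φ(Pⱼ) = Tr Φ(f x)`.
-/

open scoped ComplexOrder

/-- `g` applied to a Hermitian matrix via the functional calculus
(`g(A) = ∑ᵢ g(λᵢ) Pᵢ` for the spectral decomposition `A = ∑ᵢ λᵢ Pᵢ`). -/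
noncomputable def matFun {k : ℕ} {A : Matrix (Fin k) (Fin k) ℂ} (hA : A.IsHermitian)
    (g : ℝ → ℝ) : Matrix (Fin k) (Fin k) ℂ := hA.cfc g

namespace Matrix

variable {𝕜 n : Type*} [RCLike 𝕜] [Fintype n]

lemma IsHermitian.ofReal_re_star_dotProduct_mulVec {M : Matrix n n 𝕜} (hM : M.IsHermitian)
    (v : n → 𝕜) : (RCLike.re (star v ⬝ᵥ M *ᵥ v) : 𝕜) = star v ⬝ᵥ M *ᵥ v :=
  RCLike.ext (by simp) (by simp [hM.im_star_dotProduct_mulVec_self])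

variable [DecidableEq n]

lemma trace_eq_sum_star_dotProduct_mulVec {ι : Type*} [Fintype ι]
    (b : OrthonormalBasis ι 𝕜 (EuclideanSpace 𝕜 n)) (M : Matrix n n 𝕜) :
    M.trace = ∑ i, star ⇑(b i) ⬝ᵥ M *ᵥ ⇑(b i) := by
  rw [← trace_toLin_eq M (PiLp.basisFun 2 𝕜 n), ← toLpLin_eq_toLin,
    LinearMap.trace_eq_sum_inner _ b]
  simp [EuclideanSpace.inner_eq_star_dotProduct, toLpLin_apply, dotProduct_comm]

namespace IsHermitian

variable {A : Matrix n n 𝕜} (hA : A.IsHermitian)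

noncomputable def eigenprojection (j : n) : Matrix n n 𝕜 :=
  vecMulVec ⇑(hA.eigenvectorBasis j) (star ⇑(hA.eigenvectorBasis j))

lemma posSemidef_eigenprojection (j : n) : (hA.eigenprojection j).PosSemidef :=
  posSemidef_vecMulVec_self_star _

lemma cfc_eq_sum_smul_eigenprojection (g : ℝ → ℝ) :
    hA.cfc g = ∑ j, (g (hA.eigenvalues j) : 𝕜) • hA.eigenprojection j := by
  ext a b
  simp only [IsHermitian.cfc, Unitary.conjStarAlgAut_apply, mul_apply, eigenvectorUnitary_apply,
    diagonal_apply, Function.comp_apply, mul_ite, mul_zero, Finset.sum_ite_eq', Finset.mem_univ,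
    if_true, star_apply, RCLike.star_def, eigenprojection, sum_apply, smul_apply, vecMulVec_apply,
    Pi.star_apply, smul_eq_mul]
  exact Finset.sum_congr rfl fun j _ => by ring

lemma eq_sum_smul_eigenprojection :
    A = ∑ j, (hA.eigenvalues j : 𝕜) • hA.eigenprojection j :=
  hA.spectral_theorem.trans (hA.cfc_eq_sum_smul_eigenprojection id)

lemma sum_eigenprojection : ∑ j, hA.eigenprojection j = 1 := by
  simpa [IsHermitian.cfc, Function.comp_def] using (hA.cfc_eq_sum_smul_eigenprojection 1).symm

lemma trace_cfc (g : ℝ → ℝ) : (hA.cfc g).trace = ∑ i, (g (hA.eigenvalues i) : 𝕜) := by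
  rw [IsHermitian.cfc, Unitary.conjStarAlgAut_apply, trace_mul_cycle, Unitary.coe_star_mul_self,
    one_mul, trace_diagonal]
  rfl

end IsHermitian

section PositiveMap

variable {m : Type*} (Φ : Matrix n n 𝕜 →ₗ[𝕜] Matrix m m 𝕜) {A : Matrix n n 𝕜}

lemma IsHermitian.map_of_map_posSemidef (hA : A.IsHermitian)
    (hΦ : ∀ y, y.PosSemidef → (Φ y).PosSemidef) : (Φ A).IsHermitian := by
  rw [hA.eq_sum_smul_eigenprojection, map_sum]
  refine isSelfAdjoint_sum _ fun j _ => ?_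
  rw [map_smul]
  exact (hΦ _ (hA.posSemidef_eigenprojection j)).isHermitian.smul (RCLike.conj_ofReal _)

variable [Fintype m] [DecidableEq m] (hA : A.IsHermitian) {B : Matrix m m 𝕜} (hB : B.IsHermitian)

noncomputable def spectralWeight (j : n) (i : m) : ℝ :=
  RCLike.re (star ⇑(hB.eigenvectorBasis i) ⬝ᵥ Φ (hA.eigenprojection j) *ᵥ ⇑(hB.eigenvectorBasis i))

lemma spectralWeight_nonneg (hΦ : ∀ y, y.PosSemidef → (Φ y).PosSemidef) (j : n) (i : m) :
    0 ≤ spectralWeight Φ hA hB j i :=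
  (hΦ _ (hA.posSemidef_eigenprojection j)).re_dotProduct_nonneg _

lemma sum_spectralWeight (hΦ1 : Φ 1 = 1) (i : m) : ∑ j, spectralWeight Φ hA hB j i = 1 := by
  simp only [spectralWeight, ← map_sum, ← sum_mulVec, ← dotProduct_sum, hA.sum_eigenprojection,
    hΦ1, one_mulVec]
  rw [dotProduct_comm, ← EuclideanSpace.inner_eq_star_dotProduct]
  simp [hB.eigenvectorBasis.orthonormal.norm_eq_one]

lemma eigenvalues_map_eq_sum_spectralWeight_mul (hΦA : (Φ A).IsHermitian) (i : m) :
    hΦA.eigenvalues i = ∑ j, spectralWeight Φ hA hΦA j i * hA.eigenvalues j := by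
  have hΦA_eq : Φ A = ∑ j, (hA.eigenvalues j : 𝕜) • Φ (hA.eigenprojection j) := by
    conv_lhs => rw [hA.eq_sum_smul_eigenprojection, map_sum]
    simp only [map_smul]
  simp only [hΦA.eigenvalues_eq i, spectralWeight]
  generalize ⇑(hΦA.eigenvectorBasis i) = w
  simp [hΦA_eq, sum_mulVec, dotProduct_sum, smul_mulVec, dotProduct_smul, RCLike.smul_re, mul_comm]

lemma trace_map_cfc_eq_sum_spectralWeight (hΦ : ∀ y, y.PosSemidef → (Φ y).PosSemidef)
    (g : ℝ → ℝ) :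
    (Φ (hA.cfc g)).trace =
      ∑ i, ((∑ j, spectralWeight Φ hA hB j i * g (hA.eigenvalues j) : ℝ) : 𝕜) := by
  rw [trace_eq_sum_star_dotProduct_mulVec hB.eigenvectorBasis, hA.cfc_eq_sum_smul_eigenprojection]
  refine Finset.sum_congr rfl fun i _ => ?_
  simp [spectralWeight, sum_mulVec, dotProduct_sum, smul_mulVec, dotProduct_smul,
    RCLike.real_smul_eq_coe_mul, RCLike.algebraMap_eq_ofReal, mul_comm,
    (hΦ _ (hA.posSemidef_eigenprojection _)).isHermitian.ofReal_re_star_dotProduct_mulVec]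

end PositiveMap

end Matrix

theorem trace_jensen_unital_positive_map_of_isHermitian_general {n m : ℕ}
    (Φ : Matrix (Fin n) (Fin n) ℂ →ₗ[ℂ] Matrix (Fin m) (Fin m) ℂ)
    (hΦpos : ∀ y : Matrix (Fin n) (Fin n) ℂ, y.PosSemidef → (Φ y).PosSemidef)
    (hΦ1 : Φ 1 = 1)
    {x : Matrix (Fin n) (Fin n) ℂ} (hx : x.IsHermitian)
    (f : ℝ → ℝ) (hconv : ConvexOn ℝ Set.univ f) :
    ∃ hΦx : (Φ x).IsHermitian,
      (matFun hΦx f).trace ≤ (Φ (matFun hx f)).trace := by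
  have hΦx := hx.map_of_map_posSemidef Φ hΦpos
  refine ⟨hΦx, ?_⟩
  rw [matFun, matFun, hΦx.trace_cfc, Matrix.trace_map_cfc_eq_sum_spectralWeight Φ hx hΦx hΦpos,
    ← RCLike.ofReal_sum, ← RCLike.ofReal_sum, RCLike.ofReal_le_ofReal]
  refine Finset.sum_le_sum fun i _ => ?_
  rw [Matrix.eigenvalues_map_eq_sum_spectralWeight_mul Φ hx hΦx]
  simpa using hconv.map_sum_le (fun j _ => Matrix.spectralWeight_nonneg Φ hx hΦx hΦpos j i)
    (Matrix.sum_spectralWeight Φ hx hΦx hΦ1 i) (fun _ _ => Set.mem_univ _)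

/-- **Trace Jensen inequality for positive unital maps, Hermitian version.**
If `Φ` is a positive unital linear map from `n×n` to `m×m` complex matrices, `x` is Hermitian
and `f : ℝ → ℝ` is a continuous convex function, then `Φ(x)` is Hermitian and
`Tr f(Φ(x)) ≤ Tr Φ(f(x))`. -/
theorem trace_jensen_unital_positive_map_of_isHermitian {n m : ℕ}
    (Φ : Matrix (Fin n) (Fin n) ℂ →ₗ[ℂ] Matrix (Fin m) (Fin m) ℂ)
    (hΦpos : ∀ y : Matrix (Fin n) (Fin n) ℂ, y.PosSemidef → (Φ y).PosSemidef)
    (hΦ1 : Φ 1 = 1)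
    {x : Matrix (Fin n) (Fin n) ℂ} (hx : x.IsHermitian)
    (f : ℝ → ℝ) (hf : Continuous f) (hconv : ConvexOn ℝ Set.univ f) :
    ∃ hΦx : (Φ x).IsHermitian,
      (matFun hΦx f).trace ≤ (Φ (matFun hx f)).trace :=
  trace_jensen_unital_positive_map_of_isHermitian_general Φ hΦpos hΦ1 hx f hconv
end

section
/- Let a be an n×n complex matrix with a* a ≤ 1 (a contraction), let x be a Hermitian n×n complex matrix, and let f : ℝ → ℝ be a continuous convex function with f(0) = 0. Then a* x a is Hermitian and Tr f(a* x a) ≤ Tr(a* · f(x) · a). -/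
/-!
Diagonalise `x = U diag(λ) U*` and `a* x a = V diag(μ) V*` and put `b = U* a V`. Then
`diag(μ) = b* diag(λ) b`, i.e. `μᵢ = ∑ⱼ |bⱼᵢ|² λⱼ`, and every column of `b` has squared norm
at most `1` because `b* b = V* (a* a) V ≤ 1`. Jensen's inequality for weights of total mass at
most `1` (which is where `f 0 = 0` enters) gives `f(μᵢ) ≤ ∑ⱼ |bⱼᵢ|² f(λⱼ)`, and summing over `i`
yields `Tr f(a* x a) ≤ Tr (b* f(diag λ) b) = Tr (a* f(x) a)`.
-/

open Matrix
open scoped ComplexOrder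

theorem ConvexOn.map_sum_le_of_sum_le_one {𝕜 E β ι : Type*} [Field 𝕜] [LinearOrder 𝕜]
    [IsStrictOrderedRing 𝕜] [AddCommGroup E] [AddCommGroup β] [PartialOrder β]
    [IsOrderedAddMonoid β] [Module 𝕜 E] [Module 𝕜 β] [IsStrictOrderedModule 𝕜 β]
    {s : Set E} {f : E → β} {t : Finset ι} {w : ι → 𝕜} {p : ι → E}
    (hf : ConvexOn 𝕜 s f) (h₀ : ∀ i ∈ t, 0 ≤ w i) (h₁ : ∑ i ∈ t, w i ≤ 1)
    (hmem : ∀ i ∈ t, p i ∈ s) (hs : 0 ∈ s) (hf0 : f 0 = 0) :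
    f (∑ i ∈ t, w i • p i) ≤ ∑ i ∈ t, w i • f (p i) := by
  -- the missing mass `1 - ∑ w` sits on the point `0`
  simpa [hf0] using hf.map_add_sum_le h₀ (sub_add_cancel 1 _) hmem (sub_nonneg.2 h₁) hs

section

variable {m n 𝕜 : Type*} [RCLike 𝕜] [Fintype m]

theorem Matrix.conjTranspose_mul_diagonal_mul_apply_self [DecidableEq m] (b : Matrix m n 𝕜)
    (d : m → ℝ) (i : n) :
    (bᴴ * (diagonal (RCLike.ofReal ∘ d) : Matrix m m 𝕜) * b) i i =
      ((∑ j, ‖b j i‖ ^ 2 * d j : ℝ) : 𝕜) := by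
  rw [Matrix.mul_assoc, mul_apply, RCLike.ofReal_sum]
  refine Finset.sum_congr rfl fun j _ => ?_
  simp only [diagonal_mul, conjTranspose_apply, Function.comp_apply, RCLike.ofReal_mul,
    RCLike.ofReal_pow]
  rw [mul_left_comm, RCLike.star_def, RCLike.conj_mul, mul_comm]

theorem Matrix.trace_conjTranspose_mul_diagonal_mul [Fintype n] [DecidableEq m]
    (b : Matrix m n 𝕜) (d : m → ℝ) :
    (bᴴ * (diagonal (RCLike.ofReal ∘ d) : Matrix m m 𝕜) * b).trace =
      ((∑ i, ∑ j, ‖b j i‖ ^ 2 * d j : ℝ) : 𝕜) := by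
  simp only [trace, diag_apply, conjTranspose_mul_diagonal_mul_apply_self, RCLike.ofReal_sum]

theorem Matrix.sum_norm_sq_le_one_of_posSemidef_one_sub [DecidableEq n] {b : Matrix m n 𝕜}
    (hb : (1 - bᴴ * b).PosSemidef) (i : n) : ∑ j, ‖b j i‖ ^ 2 ≤ 1 := by
  have h := hb.diag_nonneg (i := i)
  rw [sub_apply, one_apply_eq, mul_apply] at h
  simp only [conjTranspose_apply, RCLike.star_def, RCLike.conj_mul] at h
  exact_mod_cast sub_nonneg.1 h

theorem ConvexOn.sum_map_le_sum_norm_sq_mul_of_diagonal_eq [Fintype n] [DecidableEq m]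
    [DecidableEq n] {s : Set ℝ} {f : ℝ → ℝ} (hf : ConvexOn ℝ s f) (hs : 0 ∈ s) (hf0 : f 0 = 0)
    {b : Matrix m n 𝕜} (hb : (1 - bᴴ * b).PosSemidef) {d : m → ℝ} (hd : ∀ j, d j ∈ s)
    {e : n → ℝ}
    (hbd : diagonal (RCLike.ofReal ∘ e) = bᴴ * (diagonal (RCLike.ofReal ∘ d) : Matrix m m 𝕜) * b) :
    ∑ i, f (e i) ≤ ∑ i, ∑ j, ‖b j i‖ ^ 2 * f (d j) := by
  refine Finset.sum_le_sum fun i _ => ?_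
  have he : e i = ∑ j, ‖b j i‖ ^ 2 * d j := by
    have h := congr_fun₂ hbd i i
    rwa [diagonal_apply_eq, conjTranspose_mul_diagonal_mul_apply_self, Function.comp_apply,
      RCLike.ofReal_inj] at h
  rw [he]
  exact hf.map_sum_le_of_sum_le_one (fun j _ => by positivity)
    (sum_norm_sq_le_one_of_posSemidef_one_sub hb i) (fun j _ => hd j) hs hf0

theorem Matrix.PosSemidef.one_sub_conjTranspose_mul_self_unitary_mul [Fintype n] [DecidableEq m]
    [DecidableEq n] {B : Matrix m n 𝕜} (hB : (1 - Bᴴ * B).PosSemidef)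
    (U : unitary (Matrix m m 𝕜)) (W : unitary (Matrix n n 𝕜)) :
    (1 - ((U : Matrix m m 𝕜) * B * (W : Matrix n n 𝕜))ᴴ *
      ((U : Matrix m m 𝕜) * B * (W : Matrix n n 𝕜))).PosSemidef := by
  have h : 1 - ((U : Matrix m m 𝕜) * B * (W : Matrix n n 𝕜))ᴴ *
      ((U : Matrix m m 𝕜) * B * (W : Matrix n n 𝕜)) =
      (W : Matrix n n 𝕜)ᴴ * (1 - Bᴴ * B) * (W : Matrix n n 𝕜) := by
    simp only [conjTranspose_mul, Matrix.mul_assoc, Matrix.mul_sub, Matrix.sub_mul,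
      Matrix.mul_one, ← star_eq_conjTranspose]
    rw [← Matrix.mul_assoc (star (U : Matrix m m 𝕜)), Unitary.star_mul_self_of_mem U.2,
      Unitary.star_mul_self_of_mem W.2, Matrix.one_mul]
  rw [h]
  exact hB.conjTranspose_mul_mul_same _

theorem Matrix.trace_conjStarAlgAut [DecidableEq m] (u : unitary (Matrix m m 𝕜))
    (M : Matrix m m 𝕜) : (Unitary.conjStarAlgAut 𝕜 _ u M).trace = M.trace := by
  rw [Unitary.conjStarAlgAut_apply, trace_mul_cycle, Unitary.coe_star_mul_self, Matrix.one_mul]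

theorem Matrix.IsHermitian.trace_cfc_s7 [DecidableEq m] {A : Matrix m m 𝕜} (hA : A.IsHermitian)
    (g : ℝ → ℝ) : (hA.cfc g).trace = ∑ i, (g (hA.eigenvalues i) : 𝕜) := by
  rw [IsHermitian.cfc, trace_conjStarAlgAut, trace_diagonal]
  rfl

theorem Matrix.IsHermitian.cfc_id [DecidableEq m] {A : Matrix m m 𝕜} (hA : A.IsHermitian) :
    hA.cfc id = A := by
  rw [IsHermitian.cfc, Function.id_comp, ← hA.spectral_theorem]

theorem Matrix.IsHermitian.star_mul_conjTranspose_mul_cfc_mul_mul [Fintype n] [DecidableEq m]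
    {A : Matrix m m 𝕜} (hA : A.IsHermitian) (B : Matrix m n 𝕜) (W : Matrix n n 𝕜)
    (g : ℝ → ℝ) :
    star W * (Bᴴ * hA.cfc g * B) * W =
      ((star hA.eigenvectorUnitary : Matrix m m 𝕜) * B * W)ᴴ *
        (diagonal (RCLike.ofReal ∘ g ∘ hA.eigenvalues) : Matrix m m 𝕜) *
        ((star hA.eigenvectorUnitary : Matrix m m 𝕜) * B * W) := by
  simp only [IsHermitian.cfc, Unitary.conjStarAlgAut_apply, conjTranspose_mul,
    star_eq_conjTranspose, conjTranspose_conjTranspose, Matrix.mul_assoc]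

end

theorem trace_jensen_conjugation_by_contraction_general {n : ℕ}
    (a : Matrix (Fin n) (Fin n) ℂ) (ha : (1 - aᴴ * a).PosSemidef)
    {x : Matrix (Fin n) (Fin n) ℂ} (hx : x.IsHermitian)
    (f : ℝ → ℝ) (hconv : ConvexOn ℝ Set.univ f)
    (hf0 : f 0 = 0) :
    ∃ hK : (aᴴ * x * a).IsHermitian,
      (matFun hK f).trace ≤ (aᴴ * matFun hx f * a).trace := by
  have hK : (aᴴ * x * a).IsHermitian := isHermitian_conjTranspose_mul_mul a hx
  refine ⟨hK, ?_⟩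
  set V := (hK.eigenvectorUnitary : Matrix (Fin n) (Fin n) ℂ)
  set b := (star hx.eigenvectorUnitary : Matrix (Fin n) (Fin n) ℂ) * a * V
  have hdiag : diagonal (RCLike.ofReal ∘ hK.eigenvalues) =
      bᴴ * diagonal (RCLike.ofReal ∘ hx.eigenvalues) * b := by
    rw [← hK.conjStarAlgAut_star_eigenvectorUnitary, Unitary.conjStarAlgAut_star_apply]
    have h := hx.star_mul_conjTranspose_mul_cfc_mul_mul a V id
    rwa [hx.cfc_id, Function.id_comp] at h
  have hb : (1 - bᴴ * b).PosSemidef :=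
    ha.one_sub_conjTranspose_mul_self_unitary_mul (star hx.eigenvectorUnitary) hK.eigenvectorUnitary
  have hRHS : (aᴴ * matFun hx f * a).trace =
      (bᴴ * diagonal (RCLike.ofReal ∘ f ∘ hx.eigenvalues) * b).trace := by
    rw [matFun, ← hx.star_mul_conjTranspose_mul_cfc_mul_mul,
      ← trace_conjStarAlgAut (star hK.eigenvectorUnitary), Unitary.conjStarAlgAut_star_apply]
  rw [matFun, hK.trace_cfc_s7, hRHS, trace_conjTranspose_mul_diagonal_mul]
  exact_mod_cast hconv.sum_map_le_sum_norm_sq_mul_of_diagonal_eq trivial hf0 hb (fun _ => trivial)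
    hdiag

/-- **Trace Jensen inequality for conjugation by a contraction (Harada–Kosaki, matrix case).**
If `a` is an `n×n` complex matrix with `a* a ≤ 1` (i.e. `1 - a* a` is positive semidefinite),
`x` is Hermitian and `f : ℝ → ℝ` is a continuous convex function with `f(0) = 0`, then `a* x a`
is Hermitian and `Tr f(a* x a) ≤ Tr (a* · f(x) · a)`. -/
theorem trace_jensen_conjugation_by_contraction {n : ℕ}
    (a : Matrix (Fin n) (Fin n) ℂ) (ha : (1 - aᴴ * a).PosSemidef)
    {x : Matrix (Fin n) (Fin n) ℂ} (hx : x.IsHermitian)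
    (f : ℝ → ℝ) (hf : Continuous f) (hconv : ConvexOn ℝ Set.univ f)
    (hf0 : f 0 = 0) :
    ∃ hK : (aᴴ * x * a).IsHermitian,
      (matFun hK f).trace ≤ (aᴴ * matFun hx f * a).trace :=
  trace_jensen_conjugation_by_contraction_general a ha hx f hconv hf0
end

section
/- Let Φ be a positive unital linear map from the n×n complex matrices to themselves, let x be a Hermitian n×n complex matrix, let f : ℝ → ℝ be a continuous convex function, and let I ⊆ ℝ be an interval on which f is monotone (either increasing or decreasing) and on which f(t) ≤ 0. Set p := e_I(Φ(x)), the spectral projection of Φ(x) on I. Then for every s > 0 one has rank e_{(s,∞)}((p·Φ(f(x))·p)₋) ≤ rank e_{(s,∞)}(−p·f(Φ(x))·p), where y₋ denotes the negative part in the Jordan decomposition of a Hermitian matrix y (i.e. y₋ = g(y) with g(t) = max(−t, 0)). -/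
open Matrix
open scoped ComplexOrder

lemma matFun_isHermitian {k : ℕ} {A : Matrix (Fin k) (Fin k) ℂ} (hA : A.IsHermitian)
    (g : ℝ → ℝ) : (matFun hA g).IsHermitian := by
  rw [matFun, ← hA.cfc_eq g]
  exact cfc_predicate g A

/-- The spectral projection `e_S(A) = ∑_{i : λᵢ ∈ S} Pᵢ` of a Hermitian matrix `A`
on a set `S ⊆ ℝ`. -/
noncomputable def specProj {k : ℕ} {A : Matrix (Fin k) (Fin k) ℂ} (hA : A.IsHermitian)
    (S : Set ℝ) : Matrix (Fin k) (Fin k) ℂ := matFun hA (Set.indicator S 1)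

/-! If the inequality failed, a dimension count would give a nonzero vector `v` in the range of
`e_{(-∞,-s)}(p Φ(f x) p)` and of `e_{Jᶜ}(Φ x)`, where `J = {t ∈ I | f t < -s}`. Then `u = p v`
lies in the range of `e_K(Φ x)` for `K = {t ∈ I | -s ≤ f t}`, which is an interval because `f` is
monotone on `I`; so the Rayleigh quotient `m = ⟨u, Φ(x) u⟩ / ‖u‖²` lies in `K`. Pushing a
supporting line of `f` at `m` through the positive unital map `Φ` gives
`⟨v, p Φ(f x) p v⟩ = ⟨u, Φ(f x) u⟩ ≥ f(m) ‖u‖² ≥ -s ‖u‖² ≥ -s ‖v‖²`, a contradiction. -/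

open Set

lemma exists_ne_zero_mem_range_mulVecLin_of_lt_rank_add_rank {K n : Type*} [Field K] [Fintype n]
    (M N : Matrix n n K) (h : Fintype.card n < M.rank + N.rank) :
    ∃ v ≠ 0, v ∈ LinearMap.range M.mulVecLin ∧ v ∈ LinearMap.range N.mulVecLin := by
  by_contra! hdisj
  have hdisj' : Disjoint (LinearMap.range M.mulVecLin) (LinearMap.range N.mulVecLin) :=
    Submodule.disjoint_def.2 fun v hM hN => not_not.1 fun h0 => hdisj v h0 hM hN
  have hle := Submodule.finrank_add_finrank_le_of_disjoint hdisj'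
  rw [Module.finrank_fintype_fun_eq_card] at hle
  exact h.not_ge hle

lemma dotProduct_mul_mul_mulVec_of_isHermitian {R n : Type*} [CommSemiring R] [StarRing R]
    [Fintype n] {P : Matrix n n R} (hP : P.IsHermitian) (B : Matrix n n R) (v : n → R) :
    star v ⬝ᵥ (P * B * P) *ᵥ v = star (P *ᵥ v) ⬝ᵥ B *ᵥ (P *ᵥ v) := by
  rw [← mulVec_mulVec, ← mulVec_mulVec, dotProduct_mulVec, star_mulVec, hP.eq]

lemma re_dotProduct_star_self_pos {n : Type*} [Fintype n] {v : n → ℂ} (hv : v ≠ 0) :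
    0 < (star v ⬝ᵥ v).re :=
  (Complex.pos_iff.1 (dotProduct_star_self_pos_iff.2 hv)).1

lemma ConvexOn.add_rightDeriv_mul_sub_le {f : ℝ → ℝ} (hf : ConvexOn ℝ univ f) (m t : ℝ) :
    f m + derivWithin f (Ioi m) m * (t - m) ≤ f t := by
  have hm : m ∈ interior univ := by simp
  rcases lt_trichotomy t m with htm | rfl | hmt
  · have h := (hf.slope_le_leftDeriv_of_mem_interior (mem_univ t) hm htm).trans
      (hf.leftDeriv_le_rightDeriv_of_mem_interior hm)
    rw [slope_def_field, div_le_iff₀ (sub_pos.2 htm)] at h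
    linarith
  · simp
  · have h := hf.rightDeriv_le_slope_of_mem_interior hm (mem_univ t) hmt
    rw [slope_def_field, le_div_iff₀ (sub_pos.2 hmt)] at h
    linarith

lemma Set.OrdConnected.sep_le_of_monotoneOn_or_antitoneOn {α β : Type*} [LinearOrder α] [Preorder β]
    {I : Set α} {f : α → β} (hI : I.OrdConnected) (hf : MonotoneOn f I ∨ AntitoneOn f I) (c : β) :
    {t ∈ I | c ≤ f t}.OrdConnected := by
  refine ⟨fun a ha b hb t ht => ⟨hI.out ha.1 hb.1 ht, ?_⟩⟩
  rcases hf with hf | hf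
  · exact ha.2.trans (hf ha.1 (hI.out ha.1 hb.1 ht) ht.1)
  · exact hb.2.trans (hf (hI.out ha.1 hb.1 ht) hb.1 ht.2)

section SpectralCalculus

variable {k : ℕ} {A : Matrix (Fin k) (Fin k) ℂ} (hA : A.IsHermitian)

lemma matFun_eq_cfc (g : ℝ → ℝ) : matFun hA g = cfc g A := (hA.cfc_eq g).symm

lemma matFun_neg (g : ℝ → ℝ) : matFun hA (fun t => -g t) = -matFun hA g := by
  simp only [matFun_eq_cfc]
  exact cfc_neg g A

lemma specProj_isHermitian (S : Set ℝ) : (specProj hA S).IsHermitian :=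
  matFun_isHermitian hA _

lemma specProj_congr {B : Matrix (Fin k) (Fin k) ℂ} (hB : B.IsHermitian) (h : A = B) (S : Set ℝ) :
    specProj hA S = specProj hB S := by
  subst h; rfl

lemma specProj_mul_specProj (S T : Set ℝ) :
    specProj hA S * specProj hA T = specProj hA (S ∩ T) := by
  simp only [specProj, matFun_eq_cfc, Set.inter_indicator_one]
  exact (cfc_mul _ _ A (A.finite_real_spectrum.continuousOn _)
    (A.finite_real_spectrum.continuousOn _)).symm

lemma specProj_mul_matFun_mul_specProj (S : Set ℝ) (g : ℝ → ℝ) :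
    specProj hA S * matFun hA g * specProj hA S = matFun hA (S.indicator g) := by
  have hcont (h : ℝ → ℝ) : ContinuousOn h (spectrum ℝ A) := A.finite_real_spectrum.continuousOn h
  simp only [specProj, matFun_eq_cfc]
  rw [← cfc_mul _ _ A (hcont _) (hcont _), ← cfc_mul _ _ A (hcont _) (hcont _)]
  congr 1
  ext t
  by_cases ht : t ∈ S <;> simp [ht]

lemma specProj_matFun (g : ℝ → ℝ) (S : Set ℝ) :
    specProj (matFun_isHermitian hA g) S = specProj hA (g ⁻¹' S) := by
  simp only [specProj, matFun_eq_cfc]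
  rw [← cfc_comp _ _ A hA.isSelfAdjoint ((A.finite_real_spectrum.image g).continuousOn _)
    (A.finite_real_spectrum.continuousOn _)]
  rfl

lemma rank_specProj (S : Set ℝ) :
    (specProj hA S).rank = (hA.eigenvalues ⁻¹' S).ncard := by
  classical
  rw [specProj, matFun, IsHermitian.cfc, Unitary.conjStarAlgAut_apply, ← Unitary.coe_star,
    rank_mul_eq_left_of_isUnit_det _ _ (UnitaryGroup.det_isUnit _),
    rank_mul_eq_right_of_isUnit_det _ _ (UnitaryGroup.det_isUnit _), rank_diagonal,
    ← Nat.card_eq_fintype_card, ← Nat.card_coe_set_eq]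
  congr! with i
  by_cases hi : hA.eigenvalues i ∈ S <;> simp [hi]

lemma rank_specProj_add_rank_specProj_compl (S : Set ℝ) :
    (specProj hA S).rank + (specProj hA Sᶜ).rank = k := by
  rw [rank_specProj, rank_specProj, Set.preimage_compl, Set.ncard_add_ncard_compl, Nat.card_fin]

lemma exists_ne_zero_mem_range_specProj_of_rank_lt {B : Matrix (Fin k) (Fin k) ℂ}
    (hB : B.IsHermitian) {S T : Set ℝ} (h : (specProj hB T).rank < (specProj hA S).rank) :
    ∃ v ≠ 0, v ∈ LinearMap.range (specProj hA S).mulVecLin ∧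
      v ∈ LinearMap.range (specProj hB Tᶜ).mulVecLin := by
  refine exists_ne_zero_mem_range_mulVecLin_of_lt_rank_add_rank _ _ ?_
  have := rank_specProj_add_rank_specProj_compl hB T
  rw [Fintype.card_fin]
  omega

noncomputable def eigenCoord (v : Fin k → ℂ) : Fin k → ℂ :=
  star (hA.eigenvectorUnitary : Matrix (Fin k) (Fin k) ℂ) *ᵥ v

lemma star_eigenCoord_dotProduct (v w : Fin k → ℂ) :
    star (eigenCoord hA v) ⬝ᵥ eigenCoord hA w = star v ⬝ᵥ w := by
  rw [eigenCoord, eigenCoord, star_mulVec, ← star_eq_conjTranspose, star_star, ← dotProduct_mulVec,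
    mulVec_mulVec, Unitary.mul_star_self_of_mem hA.eigenvectorUnitary.2, one_mulVec]

lemma eigenCoord_matFun_mulVec (g : ℝ → ℝ) (v : Fin k → ℂ) :
    eigenCoord hA (matFun hA g *ᵥ v) = fun i => (g (hA.eigenvalues i) : ℂ) * eigenCoord hA v i := by
  rw [matFun, IsHermitian.cfc, Unitary.conjStarAlgAut_apply, eigenCoord, eigenCoord,
    mulVec_mulVec, ← Matrix.mul_assoc, ← Matrix.mul_assoc, Unitary.coe_star_mul_self,
    Matrix.one_mul, ← mulVec_mulVec]
  ext i
  rw [mulVec_diagonal]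
  rfl

lemma eigenCoord_specProj_mulVec (S : Set ℝ) (v : Fin k → ℂ) (i : Fin k) :
    eigenCoord hA (specProj hA S *ᵥ v) i
      = ((S.indicator 1 (hA.eigenvalues i) : ℝ) : ℂ) * eigenCoord hA v i := by
  rw [specProj, eigenCoord_matFun_mulVec]

lemma eigenvalues_mem_of_mem_range_specProj {S : Set ℝ} {v : Fin k → ℂ}
    (hv : v ∈ LinearMap.range (specProj hA S).mulVecLin) {i : Fin k} (hi : eigenCoord hA v i ≠ 0) :
    hA.eigenvalues i ∈ S := by
  obtain ⟨w, rfl⟩ := hv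
  by_contra hS
  simp [eigenCoord_specProj_mulVec, hS] at hi

lemma re_dotProduct_matFun_mulVec (g : ℝ → ℝ) (v : Fin k → ℂ) :
    (star v ⬝ᵥ matFun hA g *ᵥ v).re
      = ∑ i, g (hA.eigenvalues i) * Complex.normSq (eigenCoord hA v i) := by
  rw [← star_eigenCoord_dotProduct hA, eigenCoord_matFun_mulVec]
  simp only [dotProduct, Pi.star_apply, Complex.re_sum]
  refine Finset.sum_congr rfl fun i _ => ?_
  rw [mul_left_comm, RCLike.star_def, ← Complex.normSq_eq_conj_mul_self, ← Complex.ofReal_mul,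
    Complex.ofReal_re]

lemma re_dotProduct_mulVec_eq_sum (v : Fin k → ℂ) :
    (star v ⬝ᵥ A *ᵥ v).re = ∑ i, hA.eigenvalues i * Complex.normSq (eigenCoord hA v i) := by
  simpa [matFun_eq_cfc, cfc_id ℝ A hA.isSelfAdjoint] using re_dotProduct_matFun_mulVec hA id v

lemma re_dotProduct_self_eq_sum (v : Fin k → ℂ) :
    (star v ⬝ᵥ v).re = ∑ i, Complex.normSq (eigenCoord hA v i) := by
  simpa [matFun_eq_cfc, cfc_one ℝ A hA.isSelfAdjoint] using re_dotProduct_matFun_mulVec hA 1 v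

lemma re_dotProduct_mulVec_lt_of_mem_range_specProj {S : Set ℝ} {c : ℝ} (hS : S ⊆ Iio c)
    {v : Fin k → ℂ} (hv : v ∈ LinearMap.range (specProj hA S).mulVecLin) (hv0 : v ≠ 0) :
    (star v ⬝ᵥ A *ᵥ v).re < c * (star v ⬝ᵥ v).re := by
  have hpos := re_dotProduct_star_self_pos hv0
  rw [re_dotProduct_self_eq_sum hA] at hpos
  obtain ⟨i, -, hi⟩ := Finset.exists_ne_zero_of_sum_ne_zero hpos.ne'
  rw [re_dotProduct_mulVec_eq_sum hA, re_dotProduct_self_eq_sum hA, Finset.mul_sum]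
  have hlt {j : Fin k} (hj : Complex.normSq (eigenCoord hA v j) ≠ 0) : hA.eigenvalues j < c :=
    hS (eigenvalues_mem_of_mem_range_specProj hA hv (by simpa using hj))
  refine Finset.sum_lt_sum (fun j _ => ?_) ⟨i, Finset.mem_univ _, ?_⟩
  · rcases eq_or_ne (Complex.normSq (eigenCoord hA v j)) 0 with hj | hj
    · simp [hj]
    · exact mul_le_mul_of_nonneg_right (hlt hj).le (Complex.normSq_nonneg _)
  · exact mul_lt_mul_of_pos_right (hlt hi) ((Complex.normSq_nonneg _).lt_of_ne' hi)

lemma re_dotProduct_specProj_mulVec_le (S : Set ℝ) (v : Fin k → ℂ) :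
    (star (specProj hA S *ᵥ v) ⬝ᵥ specProj hA S *ᵥ v).re ≤ (star v ⬝ᵥ v).re := by
  rw [re_dotProduct_self_eq_sum hA, re_dotProduct_self_eq_sum hA]
  refine Finset.sum_le_sum fun i _ => ?_
  rw [eigenCoord_specProj_mulVec, Complex.normSq_mul, Complex.normSq_ofReal]
  by_cases h : hA.eigenvalues i ∈ S <;> simp [h, Complex.normSq_nonneg]

lemma re_dotProduct_mulVec_div_mem_of_mem_range_specProj {K : Set ℝ} (hK : Convex ℝ K)
    {u : Fin k → ℂ} (hu : u ∈ LinearMap.range (specProj hA K).mulVecLin) (hu0 : u ≠ 0) :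
    (star u ⬝ᵥ A *ᵥ u).re / (star u ⬝ᵥ u).re ∈ K := by
  classical
  set w := fun i => Complex.normSq (eigenCoord hA u i)
  have hcm : (star u ⬝ᵥ A *ᵥ u).re / (star u ⬝ᵥ u).re
      = Finset.univ.centerMass w hA.eigenvalues := by
    rw [Finset.centerMass, re_dotProduct_mulVec_eq_sum hA, re_dotProduct_self_eq_sum hA,
      div_eq_inv_mul]
    simp [w, smul_eq_mul, mul_comm]
  rw [hcm, ← Finset.centerMass_filter_ne_zero]
  refine hK.centerMass_mem (fun i _ => Complex.normSq_nonneg _) ?_ fun i hi => ?_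
  · rw [Finset.sum_filter_ne_zero, ← re_dotProduct_self_eq_sum hA]
    exact re_dotProduct_star_self_pos hu0
  · exact eigenvalues_mem_of_mem_range_specProj hA hu
      (by simpa [w] using (Finset.mem_filter.1 hi).2)

end SpectralCalculus

section PositiveUnitalMap

open scoped MatrixOrder

variable {n : ℕ} {Φ : Matrix (Fin n) (Fin n) ℂ →ₗ[ℂ] Matrix (Fin n) (Fin n) ℂ}
  {x : Matrix (Fin n) (Fin n) ℂ}

lemma affine_le_re_dotProduct_map_matFun
    (hΦpos : ∀ y : Matrix (Fin n) (Fin n) ℂ, y.PosSemidef → (Φ y).PosSemidef) (hΦ1 : Φ 1 = 1)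
    (hx : x.IsHermitian) {f : ℝ → ℝ} {a b : ℝ} (hab : ∀ t, a * t + b ≤ f t) (u : Fin n → ℂ) :
    a * (star u ⬝ᵥ Φ x *ᵥ u).re + b * (star u ⬝ᵥ u).re
      ≤ (star u ⬝ᵥ Φ (matFun hx f) *ᵥ u).re := by
  have hsplit : matFun hx f = cfc (fun t => f t - (a * t + b)) x + (a • x + b • 1) := by
    rw [cfc_sub _ _ x (x.finite_real_spectrum.continuousOn f), cfc_add_const b (a * ·) x,
      cfc_const_mul_id a x, Algebra.algebraMap_eq_smul_one, matFun_eq_cfc]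
    abel
  have hD : 0 ≤ Φ (cfc (fun t => f t - (a * t + b)) x) :=
    (hΦpos _ (cfc_nonneg fun t _ => sub_nonneg.2 (hab t)).posSemidef).nonneg
  have hQ := (Complex.nonneg_iff.1 (hD.posSemidef.dotProduct_mulVec_nonneg u)).1
  rw [hsplit, map_add, map_add, LinearMap.map_smul_of_tower, LinearMap.map_smul_of_tower, hΦ1,
    add_mulVec, add_mulVec, smul_mulVec, smul_mulVec, one_mulVec, dotProduct_add, dotProduct_add,
    dotProduct_smul, dotProduct_smul, Complex.add_re, Complex.add_re, Complex.smul_re,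
    Complex.smul_re, smul_eq_mul, smul_eq_mul]
  linarith

lemma mul_re_dotProduct_self_le_re_dotProduct_map_matFun
    (hΦpos : ∀ y : Matrix (Fin n) (Fin n) ℂ, y.PosSemidef → (Φ y).PosSemidef) (hΦ1 : Φ 1 = 1)
    (hx : x.IsHermitian) {f : ℝ → ℝ} (hf : ConvexOn ℝ univ f)
    (hΦx : (Φ x).IsHermitian) {K : Set ℝ} (hK : Convex ℝ K) {c : ℝ} (hc : ∀ t ∈ K, c ≤ f t)
    {u : Fin n → ℂ} (hu : u ∈ LinearMap.range (specProj hΦx K).mulVecLin) :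
    c * (star u ⬝ᵥ u).re ≤ (star u ⬝ᵥ Φ (matFun hx f) *ᵥ u).re := by
  rcases eq_or_ne u 0 with rfl | hu0
  · simp
  set N := (star u ⬝ᵥ u).re
  set m := (star u ⬝ᵥ Φ x *ᵥ u).re / N
  have hN : 0 < N := re_dotProduct_star_self_pos hu0
  have hmK : m ∈ K := re_dotProduct_mulVec_div_mem_of_mem_range_specProj hΦx hK hu hu0
  set d := derivWithin f (Ioi m) m
  have hsupp := affine_le_re_dotProduct_map_matFun hΦpos hΦ1 hx (f := f) (a := d)
    (b := f m - d * m) (fun t => by linarith [hf.add_rightDeriv_mul_sub_le m t]) u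
  have hmN : (star u ⬝ᵥ Φ x *ᵥ u).re = m * N := (div_mul_cancel₀ _ hN.ne').symm
  calc c * N ≤ f m * N := mul_le_mul_of_nonneg_right (hc m hmK) hN.le
    _ = d * (m * N) + (f m - d * m) * N := by ring
    _ ≤ _ := hmN ▸ hsupp

end PositiveUnitalMap

theorem specProj_rank_negPart_le_of_unital_positive_map_general {n : ℕ}
    (Φ : Matrix (Fin n) (Fin n) ℂ →ₗ[ℂ] Matrix (Fin n) (Fin n) ℂ)
    (hΦpos : ∀ y : Matrix (Fin n) (Fin n) ℂ, y.PosSemidef → (Φ y).PosSemidef)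
    (hΦ1 : Φ 1 = 1)
    {x : Matrix (Fin n) (Fin n) ℂ} (hx : x.IsHermitian)
    (f : ℝ → ℝ) (hconv : ConvexOn ℝ Set.univ f)
    (I : Set ℝ) (hI : I.OrdConnected)
    (hmono : MonotoneOn f I ∨ AntitoneOn f I) :
    ∀ hΦx : (Φ x).IsHermitian,
      ∀ (h1 : (specProj hΦx I * matFun hΦx f * specProj hΦx I).IsHermitian)
        (h2 : (specProj hΦx I * Φ (matFun hx f) * specProj hΦx I).IsHermitian),
        ∀ s : ℝ, 0 < s →
          (specProj (matFun_isHermitian h2 fun t => max (-t) 0) (Set.Ioi s)).rank ≤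
            (specProj (Matrix.IsHermitian.neg h1) (Set.Ioi s)).rank := by
  intro hΦx h1 h2 s hs
  set g : ℝ → ℝ := fun t => -I.indicator f t
  have hRHS : -(specProj hΦx I * matFun hΦx f * specProj hΦx I) = matFun hΦx g := by
    rw [specProj_mul_matFun_mul_specProj, matFun_neg]
  rw [specProj_matFun, specProj_congr h1.neg (matFun_isHermitian hΦx g) hRHS, specProj_matFun]
  by_contra! hlt
  obtain ⟨v, hv0, hvy, hvR⟩ := exists_ne_zero_mem_range_specProj_of_rank_lt h2 hΦx hlt
  set K := {t ∈ I | -s ≤ f t}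
  have hK : I ∩ (g ⁻¹' Ioi s)ᶜ = K := by
    ext t
    by_cases ht : t ∈ I <;> simp [g, K, ht, neg_le]
  have hu : specProj hΦx I *ᵥ v ∈ LinearMap.range (specProj hΦx K).mulVecLin := by
    obtain ⟨w, rfl⟩ := hvR
    exact ⟨w, by simp [mulVec_mulVec, specProj_mul_specProj, hK]⟩
  have hlow := mul_re_dotProduct_self_le_re_dotProduct_map_matFun hΦpos hΦ1 hx hconv hΦx
    ((hI.sep_le_of_monotoneOn_or_antitoneOn hmono (-s)).convex) (fun t ht => ht.2) hu
  have hup := re_dotProduct_mulVec_lt_of_mem_range_specProj h2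
    (fun t (ht : s < max (-t) 0) => lt_neg.2 ((lt_max_iff.1 ht).resolve_right hs.not_gt)) hvy hv0
  rw [dotProduct_mul_mul_mulVec_of_isHermitian (specProj_isHermitian hΦx I)] at hup
  nlinarith [re_dotProduct_specProj_mulVec_le hΦx I v]

/-- **Spectral comparison on an interval where `f` is monotone and nonpositive.**
Let `Φ` be a positive unital linear map on `n×n` matrices, `x` Hermitian, `f` continuous
convex, and `I` an interval on which `f` is monotone and nonpositive; set `p = e_I(Φ(x))`.
Then for every `s > 0`,
`rank e_(s,∞)((p·Φ(f(x))·p)₋) ≤ rank e_(s,∞)(−p·f(Φ(x))·p)`, where `y₋ = g(y)` with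
`g(t) = max(−t, 0)` is the negative part of the Jordan decomposition. -/
theorem specProj_rank_negPart_le_of_unital_positive_map {n : ℕ}
    (Φ : Matrix (Fin n) (Fin n) ℂ →ₗ[ℂ] Matrix (Fin n) (Fin n) ℂ)
    (hΦpos : ∀ y : Matrix (Fin n) (Fin n) ℂ, y.PosSemidef → (Φ y).PosSemidef)
    (hΦ1 : Φ 1 = 1)
    {x : Matrix (Fin n) (Fin n) ℂ} (hx : x.IsHermitian)
    (f : ℝ → ℝ) (hf : Continuous f) (hconv : ConvexOn ℝ Set.univ f)
    (I : Set ℝ) (hI : I.OrdConnected)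
    (hmono : MonotoneOn f I ∨ AntitoneOn f I) (hfI : ∀ t ∈ I, f t ≤ 0) :
    ∀ hΦx : (Φ x).IsHermitian,
      ∀ (h1 : (specProj hΦx I * matFun hΦx f * specProj hΦx I).IsHermitian)
        (h2 : (specProj hΦx I * Φ (matFun hx f) * specProj hΦx I).IsHermitian),
        ∀ s : ℝ, 0 < s →
          (specProj (matFun_isHermitian h2 fun t => max (-t) 0) (Set.Ioi s)).rank ≤
            (specProj (Matrix.IsHermitian.neg h1) (Set.Ioi s)).rank :=
  specProj_rank_negPart_le_of_unital_positive_map_general Φ hΦpos hΦ1 hx f hconv I hI hmono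
end
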